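/- arXiv:1104.1408 — 3 statements merged into one kernel-verified Lean document; each statement's English description precedes it below -/
import Mathlib

section
/- Let n and u be natural numbers with 2 ≤ u ≤ n − 1. Let C be a k-dimensional linear subspace of (ZMod 2)^n. Let E be the set of vectors e ∈ (ZMod 2)^n such that either e = 0, or e has Hamming weight 1, or e is an end-around phased-burst error of burst length u' with error-free gap n − u' for some 2 ≤ u' ≤ u. If distinct elements of E lie in distinct cosets of C (i.e., for all e₁ ≠ e₂ in E, e₁ − e₂ ∉ C), then 2^{n−k} ≥ n · Σ_{x=0}^{u−2} Σ_{y=0}^{x} Σ_{z=0}^{n−x−3} F(x, y, z, n) + n + 1. -/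
/-- The Hamming weight of a binary word: the number of positions where it equals 1. -/
def wt {α : Type*} [Fintype α] (f : α → ZMod 2) : ℕ :=
  (Finset.univ.filter fun i => f i = 1).card

/-- Cyclic index: the position `(s + j) mod n` in `Fin n`. -/
def cycIdx {n : ℕ} (s : Fin n) (j : ℕ) : Fin n :=
  ⟨(s.val + j) % n, Nat.mod_lt _ s.pos⟩

/-- `w : Fin n → ZMod 2` is an end-around phased-burst error of burst length `u`
with error-free gap `g = n - u` (where `1 ≤ g` and `2 ≤ u`). -/
def IsEndAroundBurst (n u : ℕ) (w : Fin n → ZMod 2) : Prop :=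
  2 ≤ u ∧ u + 1 ≤ n ∧
  ∃ s : Fin n,
    (∀ j, j < n - u → w (cycIdx s j) = 0) ∧
    w (cycIdx s (n - 1)) = 1 ∧
    w (cycIdx s (n - u)) = 1 ∧
    (∀ a L, a + L ≤ u → (∀ j, j < L → w (cycIdx s (n - u + a + j)) = 0) → L < n - u)

/-- `A(c, d, e) = Σ_{j ∈ J} (-1)^j · C(d+1, j) · C(c - j(e+1), d)` where
`J = { j : 0 ≤ j ≤ d + 1, c - j(e+1) ≥ 0 }`. -/
def Aform (c d e : ℕ) : ℤ :=
  ∑ j ∈ (Finset.range (d + 2)).filter (fun j => j * (e + 1) ≤ c),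
    (-1 : ℤ) ^ j * ((d + 1).choose j : ℤ) * (((c - j * (e + 1)).choose d : ℕ) : ℤ)

/-- `B(x, y, z) = A(x, y, z) - A(x, y, z - 1)`, with `A(x, y, -1) := 0`. -/
def Bform (x y z : ℕ) : ℤ :=
  Aform x y z - (if z = 0 then 0 else Aform x y (z - 1))

/-- `F(x, y, z, n) = 1` if `y = 0`, `x = z` and `x < ⌊n/2⌋ - 2`, else `B(x, y, z)`. -/
def Fform (x y z n : ℕ) : ℤ :=
  if y = 0 ∧ x = z ∧ x < n / 2 - 2 then 1 else Bform x y z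

/-- The single-burst-correction error set: `e = 0`, or `e` has Hamming weight 1, or `e`
is an end-around phased-burst error of burst length `u'` with error-free gap `n - u'`
for some `2 ≤ u' ≤ u`. -/
def SBCErrors (n u : ℕ) : Set (Fin n → ZMod 2) :=
  {e | e = 0 ∨ wt e = 1 ∨ ∃ u', 2 ≤ u' ∧ u' ≤ u ∧ IsEndAroundBurst n u' e}

/-!
The errors are pairwise in distinct cosets of `C`, so there are at most `2 ^ (n - k)` of them.
Besides `0` and the `n` words of weight one, take for every anchor `s`, every burst length
`x + 2 ≤ u` and every `y ≤ x` the words whose burst has `y + 2` ones separated by zero runs of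
lengths `g 0, …, g y`, summing to `x - y` and each shorter than the gap `n - x - 2`. These are
end-around bursts, and they are pairwise distinct because the word determines the anchor and
length of an end-around burst: its gap is its only run of that many zeros. Inclusion–exclusion
over the parts exceeding the bound counts the compositions `g` as
`A(x, y, n - x - 3) = Σ_z B(x, y, z)`, and `F = B` everywhere since `B(x, 0, x) = 1`.
-/

open Finset

section Compositions

lemma card_piAntidiag_univ_fin (d m : ℕ) :
    #(piAntidiag (univ : Finset (Fin d)) m) = (d + m - 1).choose m := by
  have hsym : (univ : Finset (Fin d)).sym m = univ := by
    ext; simp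
  rw [← map_sym_eq_piAntidiag, card_map, hsym, card_univ, Sym.card_sym_eq_choose,
    Fintype.card_fin]

lemma card_filter_le_piAntidiag_univ_fin {d : ℕ} (m : ℕ) (h : Fin d → ℕ)
    (hh : ∑ i, h i ≤ m) :
    #{g ∈ piAntidiag (univ : Finset (Fin d)) m | ∀ i, h i ≤ g i} =
      #(piAntidiag (univ : Finset (Fin d)) (m - ∑ i, h i)) := by
  refine (card_nbij' (· + h) (· - h) ?_ ?_ ?_ ?_).symm
  · intro g hg
    simp only [mem_coe, mem_filter, mem_piAntidiag, mem_univ, implies_true, and_true] at hg ⊢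
    refine ⟨?_, fun i => Nat.le_add_left _ _⟩
    simp only [Pi.add_apply, sum_add_distrib, hg]
    omega
  · intro g hg
    simp only [mem_coe, mem_filter, mem_piAntidiag, mem_univ, implies_true, and_true,
      Pi.sub_apply] at hg ⊢
    rw [sum_tsub_distrib univ fun i _ => hg.2 i, hg.1]
  · intro g _
    exact add_tsub_cancel_right g h
  · intro g hg
    simp only [mem_coe, mem_filter] at hg
    exact tsub_add_cancel_of_le (Pi.le_def.mpr hg.2)

def boundedCompositions (d m e : ℕ) : Finset (Fin d → ℕ) :=
  {g ∈ piAntidiag univ m | ∀ i, g i ≤ e}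

lemma card_filter_piAntidiag_forall_lt (y m e : ℕ) (T : Finset (Fin (y + 1))) :
    #{g ∈ piAntidiag (univ : Finset (Fin (y + 1))) m | ∀ i ∈ T, e < g i} =
      if #T * (e + 1) ≤ m then (m - #T * (e + 1) + y).choose y else 0 := by
  set h : Fin (y + 1) → ℕ := fun i => if i ∈ T then e + 1 else 0
  have hsum : ∑ i, h i = #T * (e + 1) := by
    simp only [h]
    rw [sum_ite_mem, univ_inter, sum_const, smul_eq_mul]
  have hfilter : {g ∈ piAntidiag (univ : Finset (Fin (y + 1))) m | ∀ i ∈ T, e < g i} =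
      {g ∈ piAntidiag (univ : Finset (Fin (y + 1))) m | ∀ i, h i ≤ g i} := by
    refine filter_congr fun g _ => ⟨fun hg i => ?_, fun hg i hi => by simpa [h, hi] using hg i⟩
    by_cases hi : i ∈ T <;> simp [h, hi, hg]
  rw [hfilter]
  split_ifs with hle
  · rw [card_filter_le_piAntidiag_univ_fin m h (hsum ▸ hle), card_piAntidiag_univ_fin, hsum,
      ← Nat.choose_symm_add]
    congr 1; omega
  · refine card_eq_zero.mpr (filter_eq_empty_iff.mpr fun g hg hhg => hle ?_)
    rw [← hsum, ← (mem_piAntidiag.mp hg).1]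
    exact sum_le_sum fun i _ => hhg i

lemma card_boundedCompositions (y m e : ℕ) :
    (#(boundedCompositions (y + 1) m e) : ℤ) =
      ∑ j ∈ range (y + 2) with j * (e + 1) ≤ m,
        (-1) ^ j * ((y + 1).choose j : ℤ) * (((m - j * (e + 1) + y).choose y : ℕ) : ℤ) := by
  have hsieve : ∀ g : Fin (y + 1) → ℕ, (if ∀ i, g i ≤ e then (1 : ℤ) else 0) =
      ∑ T ∈ univ.powerset, if ∀ i ∈ T, e < g i then (-1 : ℤ) ^ #T else 0 := by
    intro g
    have hps : {T ∈ (univ : Finset (Fin (y + 1))).powerset | ∀ i ∈ T, e < g i} =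
        ({i | e < g i} : Finset _).powerset := by
      ext T; simp [subset_iff]
    rw [← sum_filter, hps, sum_powerset_neg_one_pow_card]
    simp [filter_eq_empty_iff]
  rw [boundedCompositions, card_filter, Nat.cast_sum]
  simp only [Nat.cast_ite, Nat.cast_one, Nat.cast_zero, hsieve]
  rw [sum_comm]
  simp only [← sum_filter, sum_const, card_filter_piAntidiag_forall_lt, nsmul_eq_mul]
  rw [sum_powerset, card_univ, Fintype.card_fin, sum_filter]
  refine sum_congr rfl fun j _ => ?_
  rw [sum_congr rfl fun T hT => by rw [(mem_powersetCard.mp hT).2], sum_const, card_powersetCard,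
    card_univ, Fintype.card_fin, nsmul_eq_mul]
  split_ifs <;> push_cast <;> ring

lemma Aform_eq_card_boundedCompositions {x y : ℕ} (hyx : y ≤ x) (e : ℕ) :
    Aform x y e = #(boundedCompositions (y + 1) (x - y) e) := by
  rw [card_boundedCompositions, Aform, sum_filter, sum_filter]
  refine sum_congr rfl fun j _ => ?_
  by_cases hj : j * (e + 1) ≤ x - y
  · rw [if_pos hj, if_pos (by omega), show x - j * (e + 1) = x - y - j * (e + 1) + y by omega]
  · rw [if_neg hj]
    split_ifs
    · rw [Nat.choose_eq_zero_of_lt (show x - j * (e + 1) < y by omega)]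
      simp
    · rfl

lemma Aform_zero_middle (x e : ℕ) : Aform x 0 e = if x ≤ e then 1 else 0 := by
  simp only [Aform, sum_filter, sum_range_succ, sum_range_zero]
  split_ifs <;> simp_all; omega

lemma Fform_eq_Bform (x y z n : ℕ) : Fform x y z n = Bform x y z := by
  rw [Fform, ite_eq_right_iff]
  rintro ⟨rfl, rfl, -⟩
  simp only [Bform, Aform_zero_middle, le_refl, if_true]
  split_ifs <;> omega

lemma sum_range_succ_Bform (x y m : ℕ) : ∑ z ∈ range (m + 1), Bform x y z = Aform x y m := by
  induction m with
  | zero => simp [Bform]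
  | succ m ih =>
    rw [sum_range_succ, ih]
    simp [Bform]

lemma sum_Fform_eq_card_boundedCompositions {x y n : ℕ} (hyx : y ≤ x) (hxn : x + 3 ≤ n) :
    ∑ z ∈ range (n - x - 2), Fform x y z n =
      #(boundedCompositions (y + 1) (x - y) (n - x - 3)) := by
  simp only [Fform_eq_Bform]
  rw [show n - x - 2 = n - x - 3 + 1 by omega, sum_range_succ_Bform,
    Aform_eq_card_boundedCompositions hyx]

end Compositions

section CyclicIndex

variable {n : ℕ}

lemma cycIdx_cycIdx (s : Fin n) (a b : ℕ) : cycIdx (cycIdx s a) b = cycIdx s (a + b) :=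
  Fin.ext <| by simp only [cycIdx, Nat.mod_add_mod, Nat.add_assoc]

lemma cycIdx_zero (s : Fin n) : cycIdx s 0 = s :=
  Fin.ext <| Nat.mod_eq_of_lt s.isLt

lemma cycIdx_inj (s : Fin n) {a b : ℕ} (ha : a < n) (hb : b < n) :
    cycIdx s a = cycIdx s b ↔ a = b := by
  refine ⟨fun h => ?_, fun h => h ▸ rfl⟩
  have : a % n = b % n := Nat.ModEq.add_left_cancel' s.val (congrArg Fin.val h)
  rwa [Nat.mod_eq_of_lt ha, Nat.mod_eq_of_lt hb] at this

lemma exists_cycIdx_eq (s s' : Fin n) : ∃ r < n, cycIdx s r = s' := by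
  refine ⟨(n + s' - s) % n, Nat.mod_lt _ s.pos, Fin.ext ?_⟩
  simp only [cycIdx, Nat.add_mod_mod]
  rw [show s.val + (n + s' - s) = n + s' by omega, Nat.add_mod_left, Nat.mod_eq_of_lt s'.isLt]

end CyclicIndex

section BurstAt

variable {n u u' : ℕ} {w : Fin n → ZMod 2} {s s' : Fin n}

def IsBurstAt (n u : ℕ) (w : Fin n → ZMod 2) (s : Fin n) : Prop :=
  (∀ j, j < n - u → w (cycIdx s j) = 0) ∧
    w (cycIdx s (n - 1)) = 1 ∧
    w (cycIdx s (n - u)) = 1 ∧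
    (∀ a L, a + L ≤ u → (∀ j, j < L → w (cycIdx s (n - u + a + j)) = 0) → L < n - u)

lemma isEndAroundBurst_iff :
    IsEndAroundBurst n u w ↔ 2 ≤ u ∧ u + 1 ≤ n ∧ ∃ s, IsBurstAt n u w s :=
  Iff.rfl

/- A zero run of length `n - u'` starting at `s' ≠ s` would have to avoid the ones at
`s - 1` and `s + (n - u)`, so it would lie in the burst of length `u`; the last condition on
bursts forbids that as soon as `u' ≤ u`. -/
lemma IsBurstAt.eq_of_le (h : IsBurstAt n u w s) (h' : IsBurstAt n u' w s') (hu : u' ≤ u)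
    (hun : u < n) : s = s' ∧ u = u' := by
  obtain ⟨hzero, hlast, hfirst, hrun⟩ := h
  obtain ⟨hzero', hlast', -, -⟩ := h'
  obtain ⟨r, hr, rfl⟩ := exists_cycIdx_eq s s'
  simp only [cycIdx_cycIdx] at hzero' hlast'
  rcases Nat.eq_zero_or_pos r with rfl | hr0
  · refine ⟨(cycIdx_zero s).symm, ?_⟩
    by_contra hne
    simpa [hfirst] using hzero' (n - u) (by omega)
  · exfalso
    have hr1 : cycIdx s (r + (n - 1)) = cycIdx s (r - 1) := Fin.ext <| by
      simp only [cycIdx, show r + (n - 1) = r - 1 + n by omega, ← Nat.add_assoc,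
        Nat.add_mod_right]
    have hgap : n - u ≤ r - 1 := by
      by_contra hlt
      simpa [← hr1, hlast'] using hzero (r - 1) (by omega)
    by_cases hwrap : r + (n - u') ≤ n
    · refine absurd (hrun (r - (n - u)) (n - u') (by omega) fun j hj => ?_) (by omega)
      rw [show n - u + (r - (n - u)) + j = r + j by omega]
      exact hzero' j hj
    · simpa [show r + (n - 1 - r) = n - 1 by omega, hlast] using hzero' (n - 1 - r) (by omega)

lemma IsBurstAt.unique (h : IsBurstAt n u w s) (h' : IsBurstAt n u' w s') (hun : u < n)
    (hun' : u' < n) : s = s' ∧ u = u' := by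
  rcases le_total u' u with hu | hu
  · exact h.eq_of_le h' hu hun
  · obtain ⟨hs, hu⟩ := h'.eq_of_le h hu hun'
    exact ⟨hs.symm, hu.symm⟩

lemma two_le_wt_of_eq_one {ι : Type*} [Fintype ι] {w : ι → ZMod 2} {a b : ι} (ha : w a = 1)
    (hb : w b = 1) (hab : a ≠ b) : 2 ≤ wt w :=
  one_lt_card.mpr ⟨a, by simpa using ha, b, by simpa using hb, hab⟩

lemma IsBurstAt.two_le_wt (h : IsBurstAt n u w s) (hu : 2 ≤ u) (hun : u < n) : 2 ≤ wt w :=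
  two_le_wt_of_eq_one h.2.2.1 h.2.1 <| by
    rw [Ne, cycIdx_inj s (by omega) (by omega)]; omega

end BurstAt

section BurstOnes

variable {n u y y' : ℕ} {g : Fin (y + 1) → ℕ} {g' : Fin (y' + 1) → ℕ}

/-- Offsets of the ones of a burst, measured from its first one, when the runs of zeros between
consecutive ones have lengths `g 0, …, g y`. -/
def burstOnes (g : Fin (y + 1) → ℕ) : Fin (y + 2) → ℕ :=
  Fin.partialSum fun i => g i + 1

lemma burstOnes_zero : burstOnes g 0 = 0 :=
  Fin.partialSum_zero _

lemma burstOnes_succ (i : Fin (y + 1)) :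
    burstOnes g i.succ = burstOnes g i.castSucc + g i + 1 :=
  Fin.partialSum_succ _ i

lemma burstOnes_last : burstOnes g (Fin.last _) = ∑ i, (g i + 1) := by
  rw [burstOnes, Fin.partialSum, Fin.val_last, List.take_of_length_le (by simp), Fin.sum_ofFn]

lemma burstOnes_strictMono : StrictMono (burstOnes g) :=
  Fin.strictMono_iff_lt_succ.mpr fun i => by rw [burstOnes_succ]; omega

lemma burstOnes_le_last (t : Fin (y + 2)) : burstOnes g t ≤ ∑ i, (g i + 1) :=
  burstOnes_last (g := g) ▸ burstOnes_strictMono.monotone (Fin.le_last t)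

lemma exists_burstOnes_mem_Ico {G m : ℕ} (hg : ∀ i, g i < G) (hm : m ≤ ∑ i, (g i + 1)) :
    ∃ t, m ≤ burstOnes g t ∧ burstOnes g t < m + G := by
  suffices ∀ t, m ≤ burstOnes g t → ∃ t', m ≤ burstOnes g t' ∧ burstOnes g t' < m + G from
    this (Fin.last _) (burstOnes_last (g := g) ▸ hm)
  refine Fin.induction (fun hm => ⟨0, hm, ?_⟩) (fun i ih hm => ?_)
  · have := hg 0
    rw [burstOnes_zero] at hm ⊢
    omega
  · by_cases hle : m ≤ burstOnes g i.castSucc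
    · exact ih hle
    · refine ⟨i.succ, hm, ?_⟩
      have := hg i
      rw [burstOnes_succ] at hm ⊢
      omega

lemma sigma_eq_of_range_burstOnes_eq
    (h : Set.range (burstOnes g) = Set.range (burstOnes g')) :
    (⟨y, g⟩ : Σ y, Fin (y + 1) → ℕ) = ⟨y', g'⟩ := by
  have hy := congrArg (fun S : Set ℕ => Nat.card S) h
  simp only [Nat.card_range_of_injective burstOnes_strictMono.injective, Nat.card_fin] at hy
  obtain rfl : y = y' := by omega
  have hones := (burstOnes_strictMono.range_inj burstOnes_strictMono).mp h
  obtain rfl : g = g' := funext fun i => by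
    have := congrFun hones i.succ
    rw [burstOnes_succ, burstOnes_succ, congrFun hones i.castSucc] at this
    omega
  rfl

end BurstOnes

section BurstWord

def burstWord {n y : ℕ} (s : Fin n) (u : ℕ) (g : Fin (y + 1) → ℕ) : Fin n → ZMod 2 :=
  fun p => if ∃ t, p = cycIdx s (n - u + burstOnes g t) then 1 else 0

variable {n u y y' : ℕ} {g : Fin (y + 1) → ℕ} {g' : Fin (y' + 1) → ℕ} (s : Fin n)
  (hu : ∑ i, (g i + 1) + 1 = u) (hg : ∀ i, g i < n - u)
include hu hg

lemma burstWord_cycIdx {m : ℕ} (hm : m < n) :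
    burstWord s u g (cycIdx s m) = if ∃ t, m = n - u + burstOnes g t then 1 else 0 := by
  have hlt : ∀ t, n - u + burstOnes g t < n := fun t => by
    have := burstOnes_le_last (g := g) t; have := hg 0; omega
  simp only [burstWord, cycIdx_inj s hm (hlt _)]

lemma mem_range_burstOnes_iff {k : ℕ} :
    k ∈ Set.range (burstOnes g) ↔ k < u ∧ burstWord s u g (cycIdx s (n - u + k)) = 1 := by
  have := hg 0
  constructor
  · rintro ⟨t, rfl⟩
    have := burstOnes_le_last (g := g) t
    refine ⟨by omega, ?_⟩
    rw [burstWord_cycIdx s hu hg (by omega), if_pos ⟨t, rfl⟩]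
  · rintro ⟨hk, hw⟩
    rw [burstWord_cycIdx s hu hg (by omega)] at hw
    split_ifs at hw with h
    · obtain ⟨t, ht⟩ := h
      exact ⟨t, by omega⟩
    · exact absurd hw zero_ne_one

lemma isBurstAt_burstWord : IsBurstAt n u (burstWord s u g) s := by
  have hg0 := hg 0
  have hzero : ∀ m < n, (∀ t, m ≠ n - u + burstOnes g t) →
      burstWord s u g (cycIdx s m) = 0 :=
    fun m hm h => by rw [burstWord_cycIdx s hu hg hm, if_neg (not_exists.mpr h)]
  have hone : ∀ t, burstWord s u g (cycIdx s (n - u + burstOnes g t)) = 1 :=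
    fun t => (mem_range_burstOnes_iff s hu hg).mp ⟨t, rfl⟩ |>.2
  refine ⟨fun j hj => hzero j (by omega) fun t => by omega, ?_, ?_, fun a L haL hL => ?_⟩
  · have := hone (Fin.last _)
    rwa [burstOnes_last, show n - u + ∑ i, (g i + 1) = n - 1 by omega] at this
  · simpa [burstOnes_zero] using hone 0
  · by_contra hGL
    obtain ⟨t, hat, hta⟩ := exists_burstOnes_mem_Ico (m := a) hg (by omega)
    have := hL (burstOnes g t - a) (by omega)
    rw [show n - u + a + (burstOnes g t - a) = n - u + burstOnes g t by omega, hone] at this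
    exact one_ne_zero this

lemma sigma_eq_of_burstWord_eq (hu' : ∑ i, (g' i + 1) + 1 = u) (hg' : ∀ i, g' i < n - u)
    (h : burstWord s u g = burstWord s u g') : (⟨y, g⟩ : Σ y, Fin (y + 1) → ℕ) = ⟨y', g'⟩ :=
  sigma_eq_of_range_burstOnes_eq <| Set.ext fun k => by
    rw [mem_range_burstOnes_iff s hu hg, mem_range_burstOnes_iff s hu' hg', h]

end BurstWord

section BurstFamily

variable {n u x y : ℕ} {g : Fin (y + 1) → ℕ}

/-- `⟨x, y, g⟩` describes a burst of length `x + 2` with `y + 2` ones, whose `y + 1` inner zero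
runs have lengths `g i ≤ n - x - 3` summing to `x - y`. -/
def burstIndex (n u : ℕ) : Finset (Σ _ : ℕ, Σ y : ℕ, Fin (y + 1) → ℕ) :=
  {x ∈ range (u - 1) | x + 3 ≤ n}.sigma fun x =>
    (range (x + 1)).sigma fun y => boundedCompositions (y + 1) (x - y) (n - x - 3)

lemma card_burstIndex (n u : ℕ) :
    (#(burstIndex n u) : ℤ) = ∑ x ∈ range (u - 1), ∑ y ∈ range (x + 1),
      ∑ z ∈ range (n - x - 2), Fform x y z n := by
  simp only [burstIndex, card_sigma, Nat.cast_sum, sum_filter]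
  refine sum_congr rfl fun x _ => ?_
  split_ifs with hxn
  · push_cast
    exact sum_congr rfl fun y hy =>
      (sum_Fform_eq_card_boundedCompositions (Nat.lt_succ_iff.mp (mem_range.mp hy)) hxn).symm
  · simp [show n - x - 2 = 0 by omega]

lemma of_mem_burstIndex (hp : ⟨x, y, g⟩ ∈ burstIndex n u) :
    x + 2 ≤ u ∧ ∑ i, (g i + 1) + 1 = x + 2 ∧ ∀ i, g i < n - (x + 2) := by
  simp only [burstIndex, boundedCompositions, mem_sigma, mem_filter, mem_range,
    mem_piAntidiag] at hp
  obtain ⟨⟨hxu, hxn⟩, hyx, ⟨hsum, -⟩, hle⟩ := hp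
  refine ⟨by omega, ?_, fun i => by have := hle i; omega⟩
  rw [sum_add_distrib, hsum, sum_const, card_univ, Fintype.card_fin, smul_eq_mul]
  omega

def burstOf (n : ℕ) (q : Fin n × Σ _ : ℕ, Σ y : ℕ, Fin (y + 1) → ℕ) : Fin n → ZMod 2 :=
  burstWord q.1 (q.2.1 + 2) q.2.2.2

lemma isBurstAt_burstOf (s : Fin n) (hp : ⟨x, y, g⟩ ∈ burstIndex n u) :
    IsBurstAt n (x + 2) (burstOf n (s, ⟨x, y, g⟩)) s :=
  isBurstAt_burstWord s (of_mem_burstIndex hp).2.1 (of_mem_burstIndex hp).2.2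

lemma burstOf_mem_sbcErrors (s : Fin n) (hp : ⟨x, y, g⟩ ∈ burstIndex n u) :
    burstOf n (s, ⟨x, y, g⟩) ∈ SBCErrors n u ∧ 2 ≤ wt (burstOf n (s, ⟨x, y, g⟩)) := by
  obtain ⟨hxu, -, hg⟩ := of_mem_burstIndex hp
  have := hg 0
  exact ⟨Or.inr <| Or.inr ⟨_, by omega, hxu, by omega, by omega, _, isBurstAt_burstOf s hp⟩,
    (isBurstAt_burstOf s hp).two_le_wt (by omega) (by omega)⟩

lemma injOn_burstOf : Set.InjOn (burstOf n) (Set.univ ×ˢ ↑(burstIndex n u)) := by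
  rintro ⟨s, x, y, g⟩ hp ⟨s', x', y', g'⟩ hp' h
  simp only [Set.mem_prod, Set.mem_univ, true_and, mem_coe] at hp hp'
  obtain ⟨-, hu, hg⟩ := of_mem_burstIndex hp
  obtain ⟨-, hu', hg'⟩ := of_mem_burstIndex hp'
  have := hg 0
  have := hg' 0
  obtain ⟨rfl, hx⟩ := (isBurstAt_burstOf s hp).unique (h ▸ isBurstAt_burstOf s' hp')
    (by omega) (by omega)
  obtain rfl : x = x' := by omega
  rw [sigma_eq_of_burstWord_eq s hu hg hu' hg' h]

end BurstFamily

lemma Submodule.card_le_pow_finrank_sub_of_sub_notMem {K V : Type*} [Field K] [Finite K]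
    [AddCommGroup V] [Module K V] [FiniteDimensional K V] (C : Submodule K V) (S : Finset V)
    (hS : ∀ a ∈ S, ∀ b ∈ S, a ≠ b → a - b ∉ C) :
    #S ≤ Nat.card K ^ (Module.finrank K V - Module.finrank K C) := by
  have : Finite (V ⧸ C) := Module.finite_of_finite K
  calc #S = Nat.card S := (Nat.card_eq_finsetCard S).symm
    _ ≤ Nat.card (V ⧸ C) := Nat.card_le_card_of_injective (fun a => C.mkQ a) fun a b hab => by
        by_contra hne
        exact hS a a.2 b b.2 (Subtype.coe_ne_coe.mpr hne) ((Submodule.Quotient.eq C).mp hab)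
    _ = Nat.card K ^ (Module.finrank K V - Module.finrank K C) := by
        rw [Module.natCard_eq_pow_finrank (K := K), Submodule.finrank_quotient]

lemma wt_zero {ι : Type*} [Fintype ι] : wt (0 : ι → ZMod 2) = 0 := by
  simp [wt]

lemma wt_single {ι : Type*} [Fintype ι] [DecidableEq ι] (i : ι) :
    wt (Pi.single i (1 : ZMod 2)) = 1 := by
  rw [wt, card_eq_one]
  exact ⟨i, by ext j; by_cases hj : j = i <;> simp [hj, Pi.single_apply]⟩

lemma exists_finset_subset_sbcErrors (n u : ℕ) :
    ∃ E : Finset (Fin n → ZMod 2), ↑E ⊆ SBCErrors n u ∧ #E = n * #(burstIndex n u) + n + 1 := by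
  classical
  set bursts := (univ ×ˢ burstIndex n u).image (burstOf n)
  set singles := univ.image fun i : Fin n => Pi.single i (1 : ZMod 2)
  have hbursts : ∀ w ∈ bursts, w ∈ SBCErrors n u ∧ 2 ≤ wt w := by
    simp only [bursts, mem_image, mem_product, mem_univ, true_and]
    rintro _ ⟨⟨s, x, y, g⟩, hp, rfl⟩
    exact burstOf_mem_sbcErrors s hp
  have hsingles : ∀ w ∈ singles, wt w = 1 := by
    simp only [singles, mem_image, mem_univ, true_and]
    rintro _ ⟨i, rfl⟩
    exact wt_single i
  have hdisj : Disjoint singles bursts := disjoint_left.mpr fun w hs hb => by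
    have := (hbursts w hb).2; rw [hsingles w hs] at this; omega
  have h0 : (0 : Fin n → ZMod 2) ∉ singles ∪ bursts := fun h => by
    rcases mem_union.mp h with h | h
    · simpa [wt_zero] using hsingles 0 h
    · simpa [wt_zero] using (hbursts 0 h).2
  refine ⟨insert 0 (singles ∪ bursts), fun w hw => ?_, ?_⟩
  · rcases mem_insert.mp hw with rfl | hw
    · exact Or.inl rfl
    rcases mem_union.mp hw with h | h
    · exact Or.inr (Or.inl (hsingles w h))
    · exact (hbursts w h).1
  · rw [card_insert_of_notMem h0, card_union_of_disjoint hdisj,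
      card_image_of_injective _ fun i j h =>
        (by simpa [Pi.single_apply] using congrFun h j : j = i).symm,
      card_image_of_injOn (by simpa using injOn_burstOf), card_product, card_univ,
      Fintype.card_fin]
    ring

theorem stmt7_general (n u k : ℕ)
    (C : Submodule (ZMod 2) (Fin n → ZMod 2))
    (hk : Module.finrank (ZMod 2) C = k)
    (hcorr : ∀ e₁ ∈ SBCErrors n u, ∀ e₂ ∈ SBCErrors n u,
      e₁ ≠ e₂ → e₁ - e₂ ∉ C) :
    (n : ℤ) * (∑ x ∈ Finset.range (u - 1), ∑ y ∈ Finset.range (x + 1),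
        ∑ z ∈ Finset.range (n - x - 2), Fform x y z n)
      + (n : ℤ) + 1 ≤ 2 ^ (n - k) := by
  obtain ⟨E, hE, hcard⟩ := exists_finset_subset_sbcErrors n u
  have hle := C.card_le_pow_finrank_sub_of_sub_notMem E fun a ha b hb =>
    hcorr a (hE ha) b (hE hb)
  rw [hcard, Nat.card_zmod, Module.finrank_fin_fun, hk] at hle
  rw [← card_burstIndex]
  exact_mod_cast hle

/-- The single burst correction bound: if the `k`-dimensional code `C ≤ (ZMod 2)^n`
corrects the SBC error set, then
`2^(n-k) ≥ n · Σ_{x=0}^{u-2} Σ_{y=0}^{x} Σ_{z=0}^{n-x-3} F(x,y,z,n) + n + 1`. -/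
theorem stmt7 (n u k : ℕ) (hu2 : 2 ≤ u) (hun : u ≤ n - 1)
    (C : Submodule (ZMod 2) (Fin n → ZMod 2))
    (hk : Module.finrank (ZMod 2) C = k)
    (hcorr : ∀ e₁ ∈ SBCErrors n u, ∀ e₂ ∈ SBCErrors n u,
      e₁ ≠ e₂ → e₁ - e₂ ∉ C) :
    (n : ℤ) * (∑ x ∈ Finset.range (u - 1), ∑ y ∈ Finset.range (x + 1),
        ∑ z ∈ Finset.range (n - x - 2), Fform x y z n)
      + (n : ℤ) + 1 ≤ 2 ^ (n - k) :=
  stmt7_general n u k C hk hcorr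
end

section
/- Let n and x be natural numbers such that the burst length x + 2 satisfies the cyclic burst constraint x + 2 ≤ ⌊(n+1)/2⌋. Then Σ_{y=0}^{x} Σ_{z=0}^{x} F(x, y, z, n) = 2^x. -/
/-! The override in `Fform` is harmless: at `y = 0, z = x` it replaces `Bform x 0 x` by `1`,
which is already its value. The sum over `z` of `Bform x y z` telescopes to `Aform x y x`, in
which only the term `j = 0` survives, giving `C(x, y)`; summing over `y` gives `2 ^ x`. -/

open Finset

lemma Aform_of_le {c e : ℕ} (d : ℕ) (h : c ≤ e) : Aform c d e = c.choose d := by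
  have hJ : (range (d + 2)).filter (fun j => j * (e + 1) ≤ c) = {0} := by
    ext j
    simp only [mem_filter, mem_range, mem_singleton]
    constructor
    · rintro ⟨-, hj⟩
      by_contra hj0
      nlinarith [Nat.one_le_iff_ne_zero.mpr hj0]
    · rintro rfl
      simp
  simp [Aform, hJ]

lemma Aform_zero_right (c e : ℕ) : Aform c 0 e = if c ≤ e then 1 else 0 := by
  split_ifs with h
  · simp [Aform_of_le 0 h]
  · have hJ : (range 2).filter (fun j => j * (e + 1) ≤ c) = range 2 :=
      filter_true_of_mem fun j hj => by
        rw [mem_range] at hj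
        interval_cases j <;> omega
    simp [Aform, hJ, sum_range_succ]

lemma Bform_zero_self (x : ℕ) : Bform x 0 x = 1 := by
  cases x <;> simp [Bform, Aform_zero_right]

lemma sum_range_Bform (x y e : ℕ) :
    ∑ z ∈ range (e + 1), Bform x y z = Aform x y e := by
  have hB : ∀ z, Bform x y (z + 1) = Aform x y (z + 1) - Aform x y z := fun z => by
    simp [Bform]
  simp only [sum_range_succ', hB, sum_range_sub (fun z => Aform x y z)]
  simp [Bform]

theorem stmt8_general (n x : ℕ) :
    ∑ y ∈ Finset.range (x + 1), ∑ z ∈ Finset.range (x + 1), Fform x y z n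
      = (2 : ℤ) ^ x := by
  simp only [Fform_eq_Bform, sum_range_Bform, Aform_of_le _ le_rfl]
  exact_mod_cast Nat.sum_range_choose x

/-- If the burst length `x + 2` satisfies the cyclic burst constraint
`x + 2 ≤ ⌊(n+1)/2⌋`, then `Σ_{y=0}^{x} Σ_{z=0}^{x} F(x, y, z, n) = 2^x`. -/
theorem stmt8 (n x : ℕ) (h : x + 2 ≤ (n + 1) / 2) :
    ∑ y ∈ Finset.range (x + 1), ∑ z ∈ Finset.range (x + 1), Fform x y z n
      = (2 : ℤ) ^ x :=
  stmt8_general n x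
end

section
/- Let n and u be natural numbers with 1 ≤ u and u ≤ ⌊(n+1)/2⌋ (the cyclic burst constraint). Let C be a k-dimensional linear subspace of (ZMod 2)^n. Let E be the set consisting of the zero vector together with all nonzero vectors e ∈ (ZMod 2)^n whose support is contained in some cyclic interval of length u (i.e., there exists s ∈ Fin n such that e(i) = 0 for every i not of the form (s + j) mod n with 0 ≤ j < u). If distinct elements of E lie in distinct cosets of C (i.e., for all e₁ ≠ e₂ in E, e₁ − e₂ ∉ C), then 2^{n−k} ≥ n · 2^{u−1} + 1. -/
/-- The set consisting of the zero vector together with all nonzero vectors of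
`(ZMod 2)^n` whose support is contained in some cyclic interval of length `u`,
i.e. there exists `s : Fin n` such that `e i = 0` for every `i` not of the form
`(s + j) mod n` with `0 ≤ j < u`. -/
def CyclicBurstErrors (n u : ℕ) : Set (Fin n → ZMod 2) :=
  {e | e = 0 ∨ (e ≠ 0 ∧ ∃ s : Fin n, ∀ i : Fin n,
    (¬ ∃ j, j < u ∧ i = cycIdx s j) → e i = 0)}

def burstVec {n : ℕ} (u : ℕ) (s : Fin n) (p : Fin (u - 1) → ZMod 2) : Fin n → ZMod 2 :=
  fun i =>
    if h0 : (i.val + n - s.val) % n = 0 then 1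
    else if h : (i.val + n - s.val) % n < u then
      p ⟨(i.val + n - s.val) % n - 1, by omega⟩
    else 0

lemma cycIdx_offset {n : ℕ} (s i : Fin n) : cycIdx s ((i.val + n - s.val) % n) = i := by
  apply Fin.ext
  show (s.val + (i.val + n - s.val) % n) % n = i.val
  rw [Nat.add_mod_mod]
  have h : s.val + (i.val + n - s.val) = i.val + n := by
    have := s.isLt; omega
  rw [h, Nat.add_mod_right, Nat.mod_eq_of_lt i.isLt]

lemma offset_cycIdx {n : ℕ} (s : Fin n) (j : ℕ) :
    ((cycIdx s j).val + n - s.val) % n = j % n := by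
  show ((s.val + j) % n + n - s.val) % n = j % n
  have hs := s.isLt
  have h1 : (s.val + j) % n + n - s.val = (s.val + j) % n + (n - s.val) := by omega
  rw [h1, Nat.mod_add_mod]
  have h2 : s.val + j + (n - s.val) = j + n := by omega
  rw [h2, Nat.add_mod_right]

lemma burstVec_self {n u : ℕ} (s : Fin n) (p : Fin (u - 1) → ZMod 2) :
    burstVec u s p s = 1 := by
  have h : (s.val + n - s.val) % n = 0 := by
    have : s.val + n - s.val = n := by omega
    rw [this, Nat.mod_self]
  simp [burstVec, h]

lemma burstVec_support {n u : ℕ} (hu1 : 1 ≤ u) (s : Fin n) (p : Fin (u - 1) → ZMod 2)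
    (i : Fin n) (h : burstVec u s p i ≠ 0) : ∃ j, j < u ∧ i = cycIdx s j := by
  simp only [burstVec] at h
  by_cases h0 : (i.val + n - s.val) % n = 0
  · exact ⟨(i.val + n - s.val) % n, by omega, (cycIdx_offset s i).symm⟩
  · rw [dif_neg h0] at h
    by_cases h1 : (i.val + n - s.val) % n < u
    · exact ⟨(i.val + n - s.val) % n, h1, (cycIdx_offset s i).symm⟩
    · rw [dif_neg h1] at h; exact absurd rfl h

lemma burstVec_apply {n u : ℕ} (hun : u ≤ n) (s : Fin n) (p : Fin (u - 1) → ZMod 2)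
    (j : ℕ) (hj : j + 1 < u) :
    burstVec u s p (cycIdx s (j + 1)) = p ⟨j, by omega⟩ := by
  have hd : ((cycIdx s (j+1)).val + n - s.val) % n = j + 1 := by
    rw [offset_cycIdx, Nat.mod_eq_of_lt (by omega)]
  simp only [burstVec, hd]
  rw [dif_neg (by omega), dif_pos hj]
  exact congrArg p (Fin.ext (by simp))

lemma burstVec_ne_zero {n u : ℕ} (s : Fin n) (p : Fin (u - 1) → ZMod 2) :
    burstVec u s p ≠ 0 := by
  intro h
  have := burstVec_self s p
  rw [h] at this
  simp at this

lemma burstVec_mem {n u : ℕ} (hu1 : 1 ≤ u) (s : Fin n) (p : Fin (u - 1) → ZMod 2) :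
    burstVec u s p ∈ CyclicBurstErrors n u := by
  right
  exact ⟨burstVec_ne_zero s p, s, fun i hi => by
    by_contra h
    exact hi (burstVec_support hu1 s p i h)⟩

lemma burstVec_inj {n u : ℕ} (hu1 : 1 ≤ u) (hu : 2 * u ≤ n + 1) :
    Function.Injective (fun x : Fin n × (Fin (u - 1) → ZMod 2) => burstVec u x.1 x.2) := by
  rintro ⟨s, p⟩ ⟨s', p'⟩ heq
  simp only at heq
  -- first show s = s'
  have hss' : s = s' := by
    have h1 : burstVec u s p s' ≠ 0 := by
      rw [heq, burstVec_self]; simp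
    have h2 : burstVec u s' p' s ≠ 0 := by
      rw [← heq, burstVec_self]; simp
    obtain ⟨a, ha, has⟩ := burstVec_support hu1 s p s' h1
    obtain ⟨b, hb, hbs⟩ := burstVec_support hu1 s' p' s h2
    -- s' = cycIdx s a, s = cycIdx s' b
    have hna := s.isLt
    by_cases hab : a + b = 0
    · have ha0 : a = 0 := by omega
      subst ha0
      apply Fin.ext
      have := congrArg Fin.val has
      simp only [cycIdx] at this
      rw [Nat.add_zero, Nat.mod_eq_of_lt s.isLt] at this
      exact this.symm
    · exfalso
      have hsv : s.val = (s.val + (a + b)) % n := by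
        have h3 := congrArg Fin.val hbs
        have h4 := congrArg Fin.val has
        simp only [cycIdx] at h3 h4
        calc s.val = (s'.val + b) % n := h3
          _ = ((s.val + a) % n + b) % n := by rw [h4]
          _ = (s.val + (a + b)) % n := by rw [Nat.mod_add_mod, Nat.add_assoc]
      have hmod : (s.val + (a + b)) % n = s.val % n := by
        rw [← hsv, Nat.mod_eq_of_lt s.isLt]
      have hdvd : n ∣ (a + b) := by
        have := (Nat.modEq_iff_dvd' (Nat.le_add_right s.val (a+b))).mp
          (Nat.ModEq.symm hmod)
        simpa using this
      have := Nat.le_of_dvd (by omega) hdvd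
      omega
  subst hss'
  -- now p = p'
  have hp : p = p' := by
    funext j
    have hj : j.val + 1 < u := by have := j.isLt; omega
    have hun : u ≤ n := by have := s.isLt; omega
    have e1 := burstVec_apply hun s p j.val hj
    have e2 := burstVec_apply hun s p' j.val hj
    rw [heq] at e1
    rw [e2] at e1
    have : (⟨j.val, by omega⟩ : Fin (u-1)) = j := Fin.ext rfl
    rw [this] at e1
    exact e1.symm
  rw [hp]

/-- The Abramson (Hamming burst-correction) bound: if `1 ≤ u ≤ ⌊(n+1)/2⌋` and the
`k`-dimensional code `C ≤ (ZMod 2)^n` corrects all cyclic bursts of length at most `u`,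
then `2^(n-k) ≥ n · 2^(u-1) + 1`. -/
theorem stmt9 (n u k : ℕ) (hu1 : 1 ≤ u) (hu : u ≤ (n + 1) / 2)
    (C : Submodule (ZMod 2) (Fin n → ZMod 2))
    (hk : Module.finrank (ZMod 2) C = k)
    (hcorr : ∀ e₁ ∈ CyclicBurstErrors n u, ∀ e₂ ∈ CyclicBurstErrors n u,
      e₁ ≠ e₂ → e₁ - e₂ ∉ C) :
    n * 2 ^ (u - 1) + 1 ≤ 2 ^ (n - k) := by
  have hu2 : 2 * u ≤ n + 1 := by omega
  have hn : 1 ≤ n := by omega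
  -- quotient space
  set Q := (Fin n → ZMod 2) ⧸ C with hQ
  haveI : Finite Q := Finite.of_surjective _ (Submodule.Quotient.mk_surjective C)
  haveI : Fintype Q := Fintype.ofFinite Q
  -- the injection
  let F : Option (Fin n × (Fin (u - 1) → ZMod 2)) → Q := fun x =>
    match x with
    | none => 0
    | some (s, p) => Submodule.Quotient.mk (burstVec u s p)
  have hzero : (0 : Fin n → ZMod 2) ∈ CyclicBurstErrors n u := Or.inl rfl
  have hFinj : Function.Injective F := by
    rintro (_ | ⟨s, p⟩) (_ | ⟨s', p'⟩) h
    · rfl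
    · exfalso
      have : Submodule.Quotient.mk (burstVec u s' p') = (0 : Q) := h.symm
      rw [Submodule.Quotient.mk_eq_zero] at this
      exact hcorr _ (burstVec_mem hu1 s' p') 0 hzero (burstVec_ne_zero s' p')
        (by simpa using this)
    · exfalso
      have : Submodule.Quotient.mk (burstVec u s p) = (0 : Q) := h
      rw [Submodule.Quotient.mk_eq_zero] at this
      exact hcorr _ (burstVec_mem hu1 s p) 0 hzero (burstVec_ne_zero s p)
        (by simpa using this)
    · simp only [F] at h
      rw [Submodule.Quotient.eq] at h
      by_cases hne : burstVec u s p = burstVec u s' p'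
      · have h' : ((s, p) : Fin n × (Fin (u-1) → ZMod 2)) = (s', p') :=
          burstVec_inj hu1 hu2 hne
        rw [h']
      · exact absurd h (hcorr _ (burstVec_mem hu1 s p) _ (burstVec_mem hu1 s' p') hne)
  have hcard := Fintype.card_le_of_injective F hFinj
  have hcardT : Fintype.card (Option (Fin n × (Fin (u - 1) → ZMod 2)))
      = n * 2 ^ (u - 1) + 1 := by
    simp [Fintype.card_option, Fintype.card_prod, Fintype.card_fun, ZMod.card]
  -- card of Q
  have hkn : k ≤ n := by
    rw [← hk]
    calc Module.finrank (ZMod 2) C ≤ Module.finrank (ZMod 2) (Fin n → ZMod 2) :=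
          Submodule.finrank_le C
      _ = n := by simp [Module.finrank_fin_fun]
  have hfr : Module.finrank (ZMod 2) Q = n - k := by
    show Module.finrank (ZMod 2) ((Fin n → ZMod 2) ⧸ C) = n - k
    have := Submodule.finrank_quotient_add_finrank C
    rw [hk] at this
    have hpi : Module.finrank (ZMod 2) (Fin n → ZMod 2) = n := by
      simp [Module.finrank_fin_fun]
    rw [hpi] at this
    omega
  have hcardQ : Fintype.card Q = 2 ^ (n - k) := by
    rw [Module.card_eq_pow_finrank (K := ZMod 2) (V := Q), hfr, ZMod.card]
  calc n * 2 ^ (u - 1) + 1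
      = Fintype.card (Option (Fin n × (Fin (u - 1) → ZMod 2))) := hcardT.symm
    _ ≤ Fintype.card Q := hcard
    _ = 2 ^ (n - k) := hcardQ
end
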